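/- arXiv:2307.01166 — 3 statements merged into one kernel-verified Lean document; each statement's English description precedes it below -/
import Mathlib

section
/- Let d ≥ 1, β > 0, x0 ∈ ℝ^d, and let f1, f2 : ℝ^d × ℝ^d → [0,∞) be C¹ functions such that there exist constants a1, a2 > 0 with x · ∇_x f_i(z,x) ≥ −a_i for all (z,x) ∈ ℝ^d × ℝ^d (i = 1,2). Let ρ and ρ̄ be Borel probability measures on ℝ^d such that z ↦ ∇_x f1(z,x*) is ρ-integrable and z ↦ ∇_x f2(z,x*) is ρ̄-integrable. If x* ∈ ℝ^d satisfies the first-order optimality condition ∫ ∇_x f1(z,x*) dρ(z) + ∫ ∇_x f2(z,x*) dρ̄(z) + β(x* − x0) = 0, then ‖x*‖² ≤ ‖x0‖² + 2(a1 + a2)/β. -/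
open MeasureTheory
open scoped RealInnerProductSpace

/-- Lemma: uniform boundedness of the best response.
If `x*` satisfies the first-order optimality condition for the algorithm's loss, then
`‖x*‖² ≤ ‖x0‖² + 2(a1+a2)/β`. -/
theorem stmt0 {d : ℕ} (hd : 1 ≤ d) (β : ℝ) (hβ : 0 < β)
    (x0 : EuclideanSpace ℝ (Fin d))
    (f1 f2 : EuclideanSpace ℝ (Fin d) → EuclideanSpace ℝ (Fin d) → ℝ)
    (hf1nn : ∀ z x, 0 ≤ f1 z x) (hf2nn : ∀ z x, 0 ≤ f2 z x)
    (hf1C : ContDiff ℝ 1 (fun p : EuclideanSpace ℝ (Fin d) × EuclideanSpace ℝ (Fin d) => f1 p.1 p.2))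
    (hf2C : ContDiff ℝ 1 (fun p : EuclideanSpace ℝ (Fin d) × EuclideanSpace ℝ (Fin d) => f2 p.1 p.2))
    (a1 a2 : ℝ) (ha1 : 0 < a1) (ha2 : 0 < a2)
    (hf1a : ∀ z x, -a1 ≤ ⟪x, gradient (fun x' => f1 z x') x⟫)
    (hf2a : ∀ z x, -a2 ≤ ⟪x, gradient (fun x' => f2 z x') x⟫)
    (ρ ρb : Measure (EuclideanSpace ℝ (Fin d)))
    [IsProbabilityMeasure ρ] [IsProbabilityMeasure ρb]
    (xstar : EuclideanSpace ℝ (Fin d))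
    (hint1 : Integrable (fun z => gradient (fun x' => f1 z x') xstar) ρ)
    (hint2 : Integrable (fun z => gradient (fun x' => f2 z x') xstar) ρb)
    (hopt : (∫ z, gradient (fun x' => f1 z x') xstar ∂ρ)
        + (∫ z, gradient (fun x' => f2 z x') xstar ∂ρb) + β • (xstar - x0) = 0) :
    ‖xstar‖ ^ 2 ≤ ‖x0‖ ^ 2 + 2 * (a1 + a2) / β := by
  -- take inner product of the optimality condition with xstar
  have h0 : ⟪xstar, (∫ z, gradient (fun x' => f1 z x') xstar ∂ρ)
      + (∫ z, gradient (fun x' => f2 z x') xstar ∂ρb) + β • (xstar - x0)⟫ = 0 := by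
    rw [hopt, inner_zero_right]
  have h1 : ⟪xstar, (∫ z, gradient (fun x' => f1 z x') xstar ∂ρ)⟫
      = ∫ z, ⟪xstar, gradient (fun x' => f1 z x') xstar⟫ ∂ρ :=
    (integral_inner hint1 xstar).symm
  have h2 : ⟪xstar, (∫ z, gradient (fun x' => f2 z x') xstar ∂ρb)⟫
      = ∫ z, ⟪xstar, gradient (fun x' => f2 z x') xstar⟫ ∂ρb :=
    (integral_inner hint2 xstar).symm
  have hi1 : Integrable (fun z => ⟪xstar, gradient (fun x' => f1 z x') xstar⟫) ρ :=
    hint1.const_inner xstar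
  have hi2 : Integrable (fun z => ⟪xstar, gradient (fun x' => f2 z x') xstar⟫) ρb :=
    hint2.const_inner xstar
  have hI1 : -a1 ≤ ∫ z, ⟪xstar, gradient (fun x' => f1 z x') xstar⟫ ∂ρ := by
    have := integral_mono (integrable_const (-a1)) hi1 (fun z => hf1a z xstar)
    simpa using this
  have hI2 : -a2 ≤ ∫ z, ⟪xstar, gradient (fun x' => f2 z x') xstar⟫ ∂ρb := by
    have := integral_mono (integrable_const (-a2)) hi2 (fun z => hf2a z xstar)
    simpa using this
  have hx : ⟪xstar, β • (xstar - x0)⟫ = β * (‖xstar‖^2 - ⟪xstar, x0⟫) := by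
    rw [inner_smul_right, inner_sub_right, real_inner_self_eq_norm_sq]
  have hsum : ∫ z, ⟪xstar, gradient (fun x' => f1 z x') xstar⟫ ∂ρ
      + ∫ z, ⟪xstar, gradient (fun x' => f2 z x') xstar⟫ ∂ρb
      + β * (‖xstar‖^2 - ⟪xstar, x0⟫) = 0 := by
    rw [← h1, ← h2, ← hx, ← inner_add_right, ← inner_add_right]
    exact h0
  have hkey : β * (‖xstar‖^2 - ⟪xstar, x0⟫) ≤ a1 + a2 := by nlinarith
  have hcs : ⟪xstar, x0⟫ ≤ (‖xstar‖^2 + ‖x0‖^2) / 2 := by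
    have := real_inner_le_norm xstar x0
    nlinarith [sq_nonneg (‖xstar‖ - ‖x0‖)]
  have h3 : β * ‖xstar‖^2 ≤ a1 + a2 + β * (‖xstar‖^2 + ‖x0‖^2) / 2 := by nlinarith
  have hdiv : 2 * (a1 + a2) / β * β = 2 * (a1 + a2) := div_mul_cancel₀ _ hβ.ne'
  nlinarith
end

section
/- Let d ≥ 1, α, β > 0, x0 ∈ ℝ^d, λ1, λ2 ≥ 0. Let f1, f2 : ℝ^d × ℝ^d → [0,∞) be C² with Hess f1(z,x) ⪰ λ1·I_{2d} (Hessian in all 2d variables) and ∇²_x f2(z,x) ⪰ λ2·I_d for all (z,x). Let ρ̃, ρ̄ be Borel probability measures on ℝ^d, and let A be the set of Borel probability measures ρ on ℝ^d with finite second moment such that KL(ρ|ρ̃) < ∞, ∫ (W∗ρ) dρ < ∞, and z ↦ f1(z,x) is ρ-integrable for every x ∈ ℝ^d; assume A is nonempty and that x ↦ ∫ f2(z,x) dρ̄(z) is finite for all x. Define G_d(x) := sup_{ρ ∈ A} G_c(ρ,x). Then the function x ↦ G_d(x) − ((λ1 + λ2 + β)/2)‖x‖² is convex on ℝ^d; that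 is, G_d is strongly convex with constant λ_d = λ1 + λ2 + β. -/
/-! For every admissible `ρ`, the map `x ↦ G_c(ρ, x)` is `(λ₁ + λ₂ + β)`-strongly convex:
a `C²` function whose Hessian is bounded below by `m` is `m`-strongly convex (its second
derivative along any line is the Hessian in that direction), integrating against a
probability measure preserves the modulus, the penalty `β/2 ‖x - x₀‖²` is `β`-strongly
convex, and the entropy and interaction terms do not depend on `x`. In an inner product
space, `m`-strong convexity of `f` is convexity of `f - m/2 ‖·‖²`, and a pointwise supremum
of convex functions satisfies the convexity inequality in `EReal`. -/

open MeasureTheory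
open scoped ENNReal RealInnerProductSpace

noncomputable section

/-- The competitive-case energy functional `G_c(ρ, x)`; here the Kullback–Leibler term is
written with the Radon–Nikodym derivative of `ρ` with respect to the reference measure
`ρ̃`, and `(W∗ρ)(z) = ∫ W(z − z') dρ(z')`. -/
noncomputable def Gc {d : ℕ}
    (f1 f2 : EuclideanSpace ℝ (Fin d) → EuclideanSpace ℝ (Fin d) → ℝ)
    (W : EuclideanSpace ℝ (Fin d) → ℝ)
    (ρb ρt : Measure (EuclideanSpace ℝ (Fin d))) (α β : ℝ) (x0 : EuclideanSpace ℝ (Fin d))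
    (ρ : Measure (EuclideanSpace ℝ (Fin d))) (x : EuclideanSpace ℝ (Fin d)) : ℝ :=
  (∫ z, f1 z x ∂ρ) + (∫ z, f2 z x ∂ρb) + (β / 2) * ‖x - x0‖ ^ 2
    - α * (∫ z, Real.log ((ρ.rnDeriv ρt z).toReal) ∂ρ)
    - (1 / 2) * (∫ z, (∫ z', W (z - z') ∂ρ) ∂ρ)

/-- The admissible set `A`: probability measures `ρ` with finite second moment, finite
Kullback–Leibler divergence with respect to `ρ̃`, finite interaction energy
`∫ (W∗ρ) dρ < ∞`, and such that `f1(·,x)` is `ρ`-integrable for every `x`. -/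
def Aset1 {d : ℕ} (f1 : EuclideanSpace ℝ (Fin d) → EuclideanSpace ℝ (Fin d) → ℝ)
    (W : EuclideanSpace ℝ (Fin d) → ℝ) (ρt : Measure (EuclideanSpace ℝ (Fin d))) :
    Set (Measure (EuclideanSpace ℝ (Fin d))) :=
  {ρ | IsProbabilityMeasure ρ ∧ Integrable (fun z => ‖z‖ ^ 2) ρ ∧ ρ ≪ ρt ∧
    Integrable (fun z => Real.log ((ρ.rnDeriv ρt z).toReal)) ρ ∧
    (∫⁻ z, ∫⁻ z', ENNReal.ofReal (W (z - z')) ∂ρ ∂ρ) < ⊤ ∧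
    ∀ x : EuclideanSpace ℝ (Fin d), Integrable (fun z => f1 z x) ρ}

/-- `G_d(x) = sup_{ρ ∈ A} G_c(ρ, x)`, with values in the extended reals. -/
noncomputable def Gd1 {d : ℕ}
    (f1 f2 : EuclideanSpace ℝ (Fin d) → EuclideanSpace ℝ (Fin d) → ℝ)
    (W : EuclideanSpace ℝ (Fin d) → ℝ)
    (ρb ρt : Measure (EuclideanSpace ℝ (Fin d))) (α β : ℝ) (x0 : EuclideanSpace ℝ (Fin d))
    (x : EuclideanSpace ℝ (Fin d)) : EReal :=
  ⨆ ρ ∈ Aset1 f1 W ρt, ((Gc f1 f2 W ρb ρt α β x0 ρ x : ℝ) : EReal)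

open Set

section StrongConvexity

variable {E : Type*} [NormedAddCommGroup E] [NormedSpace ℝ E]

lemma UniformConvexOn.sub_const {s : Set E} {φ : ℝ → ℝ} {f : E → ℝ}
    (hf : UniformConvexOn s φ f) (c : ℝ) : UniformConvexOn s φ fun x => f x - c := by
  refine ⟨hf.1, fun x hx y hy a b ha hb hab => ?_⟩
  have := hf.2 hx hy ha hb hab
  simp only [smul_eq_mul] at this ⊢
  linear_combination this + c * hab

lemma StrongConvexOn.add {s : Set E} {m n : ℝ} {f g : E → ℝ}
    (hf : StrongConvexOn s m f) (hg : StrongConvexOn s n g) :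
    StrongConvexOn s (m + n) (f + g) :=
  (UniformConvexOn.add hf hg).mono fun r => le_of_eq <| by simp only [Pi.add_apply]; ring

lemma UniformConvexOn.comp_prodMk_left {F : Type*} [NormedAddCommGroup F] [NormedSpace ℝ F]
    {φ : ℝ → ℝ} {f : E × F → ℝ} (hf : UniformConvexOn univ φ f) (z : E) :
    UniformConvexOn univ φ fun x => f (z, x) := by
  refine ⟨convex_univ, fun x _ y _ a b ha hb hab => ?_⟩
  have := hf.2 (mem_univ (z, x)) (mem_univ (z, y)) ha hb hab
  rwa [Prod.smul_mk, Prod.smul_mk, Prod.mk_add_mk, Convex.combo_self hab, Prod.mk_sub_mk,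
    sub_self, Prod.norm_mk, norm_zero, max_eq_right (norm_nonneg _)] at this

lemma UniformConvexOn.integral {Ω : Type*} [MeasurableSpace Ω] {μ : Measure Ω}
    [IsProbabilityMeasure μ] {s : Set E} {φ : ℝ → ℝ} {f : Ω → E → ℝ}
    (hf : ∀ z, UniformConvexOn s φ (f z)) (hint : ∀ x ∈ s, Integrable (fun z => f z x) μ) :
    UniformConvexOn s φ fun x => ∫ z, f z x ∂μ := by
  have : Nonempty Ω := nonempty_of_isProbabilityMeasure μ
  refine ⟨(hf Classical.ofNonempty).1, fun x hx y hy a b ha hb hab => ?_⟩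
  have hax : Integrable (fun z => a • f z x) μ := (hint x hx).smul a
  have hby : Integrable (fun z => b • f z y) μ := (hint y hy).smul b
  have hcomb : Integrable (fun z => a • f z x + b • f z y) μ := hax.add hby
  calc ∫ z, f z (a • x + b • y) ∂μ
      ≤ ∫ z, (a • f z x + b • f z y - a * b * φ ‖x - y‖) ∂μ :=
        integral_mono (hint _ ((hf Classical.ofNonempty).1 hx hy ha hb hab))
          (hcomb.sub (integrable_const _)) fun z => (hf z).2 hx hy ha hb hab
    _ = a • ∫ z, f z x ∂μ + b • ∫ z, f z y ∂μ - a * b * φ ‖x - y‖ := by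
        rw [integral_sub hcomb (integrable_const _), integral_add hax hby, integral_smul,
          integral_smul, integral_const, probReal_univ, one_smul]

lemma hasDerivAt_comp_add_smul {F : Type*} [NormedAddCommGroup F] [NormedSpace ℝ F]
    {h : E → F} (hh : Differentiable ℝ h) (x v : E) (t : ℝ) :
    HasDerivAt (fun s : ℝ => h (x + s • v)) (fderiv ℝ h (x + t • v) v) t :=
  (hh _).hasFDerivAt.comp_hasDerivAt t
    ((((hasDerivAt_id t).smul_const v).const_add x).congr_deriv (one_smul ℝ v))

lemma strongConvexOn_comp_add_smul {g : E → ℝ} {m : ℝ} (hg : ContDiff ℝ 2 g)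
    (hH : ∀ p v, m * ‖v‖ ^ 2 ≤ iteratedFDeriv ℝ 2 g p ![v, v]) (x v : E) :
    StrongConvexOn univ (m * ‖v‖ ^ 2) fun t : ℝ => g (x + t • v) := by
  have hg1 : Differentiable ℝ g := hg.differentiable (by norm_num)
  have hg2 : Differentiable ℝ (fderiv ℝ g) :=
    (hg.fderiv_right (m := 1) (by norm_num)).differentiable one_ne_zero
  rw [strongConvexOn_iff_convex]
  simp only [Real.norm_eq_abs, sq_abs]
  refine convexOn_of_hasDerivWithinAt2_nonneg convex_univ
    (f' := fun t => fderiv ℝ g (x + t • v) v - m * ‖v‖ ^ 2 * t)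
    (f'' := fun t => iteratedFDeriv ℝ 2 g (x + t • v) ![v, v] - m * ‖v‖ ^ 2)
    (Continuous.continuousOn (by fun_prop)) (fun t _ => ?_) (fun t _ => ?_)
    (fun t _ => sub_nonneg.2 (hH _ v))
  · have := (hasDerivAt_comp_add_smul hg1 x v t).sub
      ((hasDerivAt_pow 2 t).const_mul (m * ‖v‖ ^ 2 / 2))
    exact (this.congr_deriv (by push_cast; ring)).hasDerivWithinAt
  · have := ((hasDerivAt_comp_add_smul hg2 x v t).clm_apply (hasDerivAt_const t v)).sub
      ((hasDerivAt_id t).const_mul (m * ‖v‖ ^ 2))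
    exact (this.congr_deriv (by simp [iteratedFDeriv_two_apply])).hasDerivWithinAt

lemma strongConvexOn_univ_of_iteratedFDeriv_two {g : E → ℝ} {m : ℝ} (hg : ContDiff ℝ 2 g)
    (hH : ∀ p v, m * ‖v‖ ^ 2 ≤ iteratedFDeriv ℝ 2 g p ![v, v]) : StrongConvexOn univ m g := by
  refine ⟨convex_univ, fun x _ y _ a b ha hb hab => ?_⟩
  have := (strongConvexOn_comp_add_smul hg hH x (y - x)).2 (mem_univ 0) (mem_univ 1) ha hb hab
  have hline : x + (a • (0 : ℝ) + b • (1 : ℝ)) • (y - x) = a • x + b • y := by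
    obtain rfl : a = 1 - b := by linarith
    module
  dsimp only at this
  rw [hline, zero_smul, add_zero, one_smul, add_sub_cancel, zero_sub, norm_neg, norm_one,
    norm_sub_rev] at this
  simpa only [smul_eq_mul, one_pow, mul_one, div_mul_eq_mul_div, mul_div_assoc] using this

lemma strongConvexOn_comp_prodMk_left_of_iteratedFDeriv_two {F : Type*}
    [NormedAddCommGroup F] [NormedSpace ℝ F]
    {f : E → F → ℝ} {m : ℝ} (hm : 0 ≤ m) (hf : ContDiff ℝ 2 fun p : E × F => f p.1 p.2)
    (hH : ∀ z x v w, m * (‖v‖ ^ 2 + ‖w‖ ^ 2) ≤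
      iteratedFDeriv ℝ 2 (fun p : E × F => f p.1 p.2) (z, x) ![(v, w), (v, w)]) (z : E) :
    StrongConvexOn univ m (f z) := by
  refine UniformConvexOn.comp_prodMk_left (strongConvexOn_univ_of_iteratedFDeriv_two hf
    fun p u => le_trans ?_ (hH p.1 p.2 u.1 u.2)) z
  have : ‖u‖ ^ 2 ≤ ‖u.1‖ ^ 2 + ‖u.2‖ ^ 2 := by
    rw [Prod.norm_def]
    rcases max_choice ‖u.1‖ ‖u.2‖ with h | h <;> rw [h]
    exacts [le_add_of_nonneg_right (sq_nonneg _), le_add_of_nonneg_left (sq_nonneg _)]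
  exact mul_le_mul_of_nonneg_left this hm

end StrongConvexity

lemma strongConvexOn_univ_half_mul_norm_sub_sq {E : Type*} [NormedAddCommGroup E]
    [InnerProductSpace ℝ E] (m : ℝ) (x₀ : E) :
    StrongConvexOn univ m fun x => m / 2 * ‖x - x₀‖ ^ 2 := by
  have haffine : (fun x => m / 2 * ‖x - x₀‖ ^ 2 - m / 2 * ‖x‖ ^ 2)
      = fun x => ((-m) • innerₛₗ ℝ x₀) x + m / 2 * ‖x₀‖ ^ 2 := by
    ext x
    simp only [norm_sub_sq_real, LinearMap.smul_apply, innerₛₗ_apply_apply, smul_eq_mul,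
      real_inner_comm x₀ x]
    ring
  rw [strongConvexOn_iff_convex, haffine]
  exact (LinearMap.convexOn _ convex_univ).add_const _

lemma EReal.biSup_sub_le_of_convexOn {ι E : Type*} [AddCommGroup E] [Module ℝ E] {s : Set ι}
    {F : ι → E → ℝ} {q : E → ℝ} (hF : ∀ i ∈ s, ConvexOn ℝ univ fun x => F i x - q x)
    {x y : E} {a b : ℝ} (ha : 0 ≤ a) (hb : 0 ≤ b) (hab : a + b = 1) :
    (⨆ i ∈ s, (F i (a • x + b • y) : EReal)) - q (a • x + b • y)
      ≤ a * ((⨆ i ∈ s, (F i x : EReal)) - q x) + b * ((⨆ i ∈ s, (F i y : EReal)) - q y) := by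
  refine EReal.sub_le_of_le_add (iSup₂_le fun i hi => ?_)
  have hreal := (hF i hi).2 (mem_univ x) (mem_univ y) ha hb hab
  simp only [smul_eq_mul] at hreal
  have hle : ∀ u, ((F i u - q u : ℝ) : EReal) ≤ (⨆ j ∈ s, (F j u : EReal)) - q u := fun u => by
    rw [EReal.coe_sub]
    exact EReal.sub_le_sub (le_iSup₂ (f := fun j (_ : j ∈ s) => (F j u : EReal)) i hi) le_rfl
  calc (F i (a • x + b • y) : EReal)
      = ((F i (a • x + b • y) - q (a • x + b • y) : ℝ) : EReal) + q (a • x + b • y) := by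
        rw [← EReal.coe_add, _root_.sub_add_cancel]
    _ ≤ ((a * (F i x - q x) + b * (F i y - q y) : ℝ) : EReal) + q (a • x + b • y) := by
        grw [hreal]
    _ ≤ _ := by
        rw [EReal.coe_add, EReal.coe_mul, EReal.coe_mul]
        gcongr
        exacts [hle x, hle y]

lemma strongConvexOn_Gc {d : ℕ} {α β lam1 lam2 : ℝ} {x0 : EuclideanSpace ℝ (Fin d)}
    {f1 f2 : EuclideanSpace ℝ (Fin d) → EuclideanSpace ℝ (Fin d) → ℝ}
    {W : EuclideanSpace ℝ (Fin d) → ℝ} {ρt ρb ρ : Measure (EuclideanSpace ℝ (Fin d))}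
    [IsProbabilityMeasure ρb] (hlam1 : 0 ≤ lam1)
    (hf1C : ContDiff ℝ 2 fun p : EuclideanSpace ℝ (Fin d) × EuclideanSpace ℝ (Fin d) =>
      f1 p.1 p.2)
    (hf2C : ContDiff ℝ 2 fun p : EuclideanSpace ℝ (Fin d) × EuclideanSpace ℝ (Fin d) =>
      f2 p.1 p.2)
    (hf1hess : ∀ z x v w, lam1 * (‖v‖ ^ 2 + ‖w‖ ^ 2) ≤
      iteratedFDeriv ℝ 2 (fun p : EuclideanSpace ℝ (Fin d) × EuclideanSpace ℝ (Fin d) =>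
        f1 p.1 p.2) (z, x) ![(v, w), (v, w)])
    (hf2hess : ∀ z x v, lam2 * ‖v‖ ^ 2 ≤ iteratedFDeriv ℝ 2 (fun x' => f2 z x') x ![v, v])
    (hf2int : ∀ x, Integrable (fun z => f2 z x) ρb) (hρ : ρ ∈ Aset1 f1 W ρt) :
    StrongConvexOn univ (lam1 + lam2 + β) (Gc f1 f2 W ρb ρt α β x0 ρ) := by
  obtain ⟨hprob, -, -, -, -, hf1int⟩ := hρ
  have hf1 : StrongConvexOn univ lam1 fun x => ∫ z, f1 z x ∂ρ :=
    UniformConvexOn.integral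
      (strongConvexOn_comp_prodMk_left_of_iteratedFDeriv_two hlam1 hf1C hf1hess)
      fun x _ => hf1int x
  have hf2 : StrongConvexOn univ lam2 fun x => ∫ z, f2 z x ∂ρb :=
    UniformConvexOn.integral (fun z => strongConvexOn_univ_of_iteratedFDeriv_two
      (hf2C.comp (contDiff_const.prodMk contDiff_id)) (hf2hess z)) fun x _ => hf2int x
  exact (((hf1.add hf2).add (strongConvexOn_univ_half_mul_norm_sub_sq β x0)).sub_const _).sub_const
    _

theorem stmt1_general {d : ℕ} (α β : ℝ)
    (x0 : EuclideanSpace ℝ (Fin d)) (lam1 lam2 : ℝ) (hlam1 : 0 ≤ lam1)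
    (f1 f2 : EuclideanSpace ℝ (Fin d) → EuclideanSpace ℝ (Fin d) → ℝ)
    (hf1C : ContDiff ℝ 2 (fun p : EuclideanSpace ℝ (Fin d) × EuclideanSpace ℝ (Fin d) => f1 p.1 p.2))
    (hf2C : ContDiff ℝ 2 (fun p : EuclideanSpace ℝ (Fin d) × EuclideanSpace ℝ (Fin d) => f2 p.1 p.2))
    (hf1hess : ∀ (z x v w : EuclideanSpace ℝ (Fin d)),
      lam1 * (‖v‖ ^ 2 + ‖w‖ ^ 2) ≤
        iteratedFDeriv ℝ 2 (fun p : EuclideanSpace ℝ (Fin d) × EuclideanSpace ℝ (Fin d) =>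
          f1 p.1 p.2) (z, x) ![(v, w), (v, w)])
    (hf2hess : ∀ (z x v : EuclideanSpace ℝ (Fin d)),
      lam2 * ‖v‖ ^ 2 ≤ iteratedFDeriv ℝ 2 (fun x' => f2 z x') x ![v, v])
    (ρt ρb : Measure (EuclideanSpace ℝ (Fin d)))
    [IsProbabilityMeasure ρb]
    (W : EuclideanSpace ℝ (Fin d) → ℝ)
    (hf2fin : ∀ x : EuclideanSpace ℝ (Fin d), Integrable (fun z => f2 z x) ρb) :
    ∀ (x y : EuclideanSpace ℝ (Fin d)) (a b : ℝ), 0 ≤ a → 0 ≤ b → a + b = 1 →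
      Gd1 f1 f2 W ρb ρt α β x0 (a • x + b • y)
          - ((((lam1 + lam2 + β) / 2) * ‖a • x + b • y‖ ^ 2 : ℝ) : EReal)
        ≤ (a : EReal) * (Gd1 f1 f2 W ρb ρt α β x0 x
              - ((((lam1 + lam2 + β) / 2) * ‖x‖ ^ 2 : ℝ) : EReal))
          + (b : EReal) * (Gd1 f1 f2 W ρb ρt α β x0 y
              - ((((lam1 + lam2 + β) / 2) * ‖y‖ ^ 2 : ℝ) : EReal)) := by
  intro x y a b ha hb hab
  exact EReal.biSup_sub_le_of_convexOn (fun ρ hρ => strongConvexOn_iff_convex.1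
    (strongConvexOn_Gc hlam1 hf1C hf2C hf1hess hf2hess hf2fin hρ)) ha hb hab

/-- Lemma D.8: strong convexity of `G_d`. Under the convexity
assumptions on `f1` and `f2`, the function `x ↦ G_d(x) − ((λ1+λ2+β)/2)‖x‖²` is convex,
i.e. `G_d` is strongly convex with constant `λ1 + λ2 + β`. -/
theorem stmt1 {d : ℕ} (hd : 1 ≤ d) (α β : ℝ) (hα : 0 < α) (hβ : 0 < β)
    (x0 : EuclideanSpace ℝ (Fin d)) (lam1 lam2 : ℝ) (hlam1 : 0 ≤ lam1) (hlam2 : 0 ≤ lam2)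
    (f1 f2 : EuclideanSpace ℝ (Fin d) → EuclideanSpace ℝ (Fin d) → ℝ)
    (hf1nn : ∀ z x, 0 ≤ f1 z x) (hf2nn : ∀ z x, 0 ≤ f2 z x)
    (hf1C : ContDiff ℝ 2 (fun p : EuclideanSpace ℝ (Fin d) × EuclideanSpace ℝ (Fin d) => f1 p.1 p.2))
    (hf2C : ContDiff ℝ 2 (fun p : EuclideanSpace ℝ (Fin d) × EuclideanSpace ℝ (Fin d) => f2 p.1 p.2))
    (hf1hess : ∀ (z x v w : EuclideanSpace ℝ (Fin d)),
      lam1 * (‖v‖ ^ 2 + ‖w‖ ^ 2) ≤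
        iteratedFDeriv ℝ 2 (fun p : EuclideanSpace ℝ (Fin d) × EuclideanSpace ℝ (Fin d) =>
          f1 p.1 p.2) (z, x) ![(v, w), (v, w)])
    (hf2hess : ∀ (z x v : EuclideanSpace ℝ (Fin d)),
      lam2 * ‖v‖ ^ 2 ≤ iteratedFDeriv ℝ 2 (fun x' => f2 z x') x ![v, v])
    (ρt ρb : Measure (EuclideanSpace ℝ (Fin d)))
    [IsProbabilityMeasure ρt] [IsProbabilityMeasure ρb]
    (W : EuclideanSpace ℝ (Fin d) → ℝ) (hWc : Continuous W) (hWnn : ∀ z, 0 ≤ W z)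
    (hAne : (Aset1 f1 W ρt).Nonempty)
    (hf2fin : ∀ x : EuclideanSpace ℝ (Fin d), Integrable (fun z => f2 z x) ρb) :
    ∀ (x y : EuclideanSpace ℝ (Fin d)) (a b : ℝ), 0 ≤ a → 0 ≤ b → a + b = 1 →
      Gd1 f1 f2 W ρb ρt α β x0 (a • x + b • y)
          - ((((lam1 + lam2 + β) / 2) * ‖a • x + b • y‖ ^ 2 : ℝ) : EReal)
        ≤ (a : EReal) * (Gd1 f1 f2 W ρb ρt α β x0 x
              - ((((lam1 + lam2 + β) / 2) * ‖x‖ ^ 2 : ℝ) : EReal))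
          + (b : EReal) * (Gd1 f1 f2 W ρb ρt α β x0 y
              - ((((lam1 + lam2 + β) / 2) * ‖y‖ ^ 2 : ℝ) : EReal)) :=
  stmt1_general α β x0 lam1 lam2 hlam1 f1 f2 hf1C hf2C hf1hess hf2hess ρt ρb W hf2fin
end
end

section
/- Let d ≥ 1, α, β > 0, x0 ∈ ℝ^d, λ1, λ2 ≥ 0, and assume: (i) f1, f2 : ℝ^d × ℝ^d → [0,∞) are C² with Hess f1(z,x) ⪰ λ1·I_{2d}, ∇²_x f2(z,x) ⪰ λ2·I_d, and x·∇_x f_i(z,x) ≥ −a_i for constants a_i > 0 (i = 1,2); (ii) ρ̃ is a probability measure on ℝ^d with an L¹ density such that log ρ̃ ∈ C²(ℝ^d) and ∇²_z log ρ̃(z) ⪯ −λ̃·I_d for some λ̃ > 0; (iii) W : ℝ^d → [0,∞) is C², convex, symmetric (W(−z) = W(z)), with z·∇W(z) ≥ −D and ‖∇W(z)‖ ≤ D(1+‖z‖) for some D > 0; (iv) ∇²_z f1(z,x) ⪯ Λ1·I_d for all (z,x) and sup_{‖x‖≤R} ∫ f2(z,x) dρ̄(z) < ∞ for every R > 0,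 where ρ̄ is a fixed probability measure on ℝ^d; and (v) αλ̃ > Λ1. Let A be the set of probability measures ρ on ℝ^d with finite second moment and KL(ρ|ρ̃) < ∞, and assume A is nonempty. Then G_d(x) := sup_{ρ ∈ A} G_c(ρ,x) is finite for every x ∈ ℝ^d and there exists a unique x_∞ ∈ ℝ^d such that G_d(x_∞) ≤ G_d(x) for all x ∈ ℝ^d. -/
/-!
Each `G_c(ρ, ·)` is `β`-strongly convex: `f1` and `f2` are convex in `x` and the rest is
`(β/2)‖x - x0‖²` plus a constant. A pointwise supremum of `β`-strongly convex functions is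
`β`-strongly convex, so once `G_d` is finite it is continuous, coercive and has exactly one
minimiser. Finiteness comes from the Donsker–Varadhan bound
`∫ ψ dρ - log ∫ e^ψ dρ̃ ≤ KL(ρ | ρ̃)` with the Gaussian weight `ψ = s‖z‖²`: log-concavity of `ρ̃`
makes `e^ψ` integrable when `s < λ̃/2`, and `Λ1/2 < α s` makes `f1(z, x) - α ψ(z)` bounded above
in `z`. This is where `αλ̃ > Λ1` enters.
-/

open MeasureTheory
open scoped ENNReal RealInnerProductSpace

noncomputable section

/-- The admissible set `A`: probability measures with finite second moment and finite
Kullback–Leibler divergence with respect to `ρ̃` (i.e. `ρ ≪ ρ̃` and the log-likelihood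
ratio is `ρ`-integrable). -/
def Aset {d : ℕ} (ρt : Measure (EuclideanSpace ℝ (Fin d))) : Set (Measure (EuclideanSpace ℝ (Fin d))) :=
  {ρ | IsProbabilityMeasure ρ ∧ Integrable (fun z => ‖z‖ ^ 2) ρ ∧ ρ ≪ ρt ∧
    Integrable (fun z => Real.log ((ρ.rnDeriv ρt z).toReal)) ρ}

open Set Real Metric

section SecondOrder

variable {E : Type*} [NormedAddCommGroup E] [NormedSpace ℝ E]

theorem le_add_deriv_add_of_hasDerivAt_of_le {g g' g'' : ℝ → ℝ} {c : ℝ}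
    (hg : ∀ t, HasDerivAt g (g' t) t) (hg' : ∀ t, HasDerivAt g' (g'' t) t)
    (hc : ∀ t, g'' t ≤ c) : g 1 ≤ g 0 + g' 0 + c / 2 := by
  have hg'_le : ∀ t ∈ Ico (0 : ℝ) 1, g' t ≤ g' 0 + c * t := fun t ht => by
    have := image_sub_le_mul_sub_of_deriv_le (fun t => (hg' t).differentiableAt)
      (fun t => (hg' t).deriv ▸ hc t) ht.1
    linarith
  have hB : ∀ t : ℝ, HasDerivAt (fun t => g 0 + t * g' 0 + c * t ^ 2 / 2) (g' 0 + c * t) t :=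
    fun t => by
      have := (((hasDerivAt_id t).mul_const (g' 0)).const_add (g 0)).add
        (((hasDerivAt_pow 2 t).const_mul c).div_const 2)
      refine this.congr_deriv ?_
      ring
  have := image_le_of_deriv_right_le_deriv_boundary
    (fun t _ => (hg t).continuousAt.continuousWithinAt) (fun t _ => (hg t).hasDerivWithinAt)
    (by simp) (fun t _ => (hB t).continuousAt.continuousWithinAt)
    (fun t _ => (hB t).hasDerivWithinAt) hg'_le (right_mem_Icc.2 zero_le_one)
  simpa using this

theorem le_add_fderiv_add_of_iteratedFDeriv_two_le {f : E → ℝ} (hf : ContDiff ℝ 2 f) (x v : E)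
    {c : ℝ} (hc : ∀ y, iteratedFDeriv ℝ 2 f y ![v, v] ≤ c) :
    f (x + v) ≤ f x + fderiv ℝ f x v + c / 2 := by
  have hline : ∀ t : ℝ, HasDerivAt (fun s : ℝ => x + s • v) v t := fun t => by
    simpa using ((hasDerivAt_id t).smul_const v).const_add x
  have h1 : ∀ t : ℝ, HasDerivAt (fun s => f (x + s • v)) (fderiv ℝ f (x + t • v) v) t :=
    fun t => ((hf.differentiable (by norm_num) _).hasFDerivAt).comp_hasDerivAt t (hline t)
  have h2 : ∀ t : ℝ, HasDerivAt (fun s => fderiv ℝ f (x + s • v) v)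
      (iteratedFDeriv ℝ 2 f (x + t • v) ![v, v]) t := fun t => by
    have hD := ((hf.fderiv_right (m := 1) (by norm_num)).differentiable one_ne_zero
      (x + t • v)).hasFDerivAt
    refine ((hD.clm_apply (hasFDerivAt_const v _)).comp_hasDerivAt t (hline t)).congr_deriv ?_
    simp [iteratedFDeriv_two_apply]
  simpa using le_add_deriv_add_of_hasDerivAt_of_le h1 h2 (fun t => hc _)

theorem le_add_norm_fderiv_mul_add_of_iteratedFDeriv_two_le {f : E → ℝ} (hf : ContDiff ℝ 2 f)
    {c : ℝ} (hc : ∀ y v, iteratedFDeriv ℝ 2 f y ![v, v] ≤ c * ‖v‖ ^ 2) (x v : E) :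
    f (x + v) ≤ f x + ‖fderiv ℝ f x‖ * ‖v‖ + c / 2 * ‖v‖ ^ 2 := by
  have := le_add_fderiv_add_of_iteratedFDeriv_two_le hf x v (hc · v)
  have := (le_abs_self _).trans ((fderiv ℝ f x).le_opNorm v)
  linarith

theorem exists_forall_sub_mul_sq_norm_le {g : E → ℝ} (hg : ContDiff ℝ 2 g) {c : ℝ}
    (hc : ∀ y v, iteratedFDeriv ℝ 2 g y ![v, v] ≤ c * ‖v‖ ^ 2) {a : ℝ} (ha : c / 2 < a) :
    ∃ M, ∀ z, g z - a * ‖z‖ ^ 2 ≤ M := by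
  set b := ‖fderiv ℝ g 0‖
  refine ⟨g 0 + b ^ 2 / (4 * (a - c / 2)), fun z => ?_⟩
  have hTaylor := le_add_norm_fderiv_mul_add_of_iteratedFDeriv_two_le hg hc 0 z
  have hAMGM : b * ‖z‖ - (a - c / 2) * ‖z‖ ^ 2 ≤ b ^ 2 / (4 * (a - c / 2)) := by
    rw [le_div_iff₀ (by linarith)]
    nlinarith [sq_nonneg (b - 2 * (a - c / 2) * ‖z‖)]
  rw [zero_add] at hTaylor
  linarith

theorem convexOn_univ_of_add_le {f : E → ℝ} (f' : E → E →L[ℝ] ℝ)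
    (h : ∀ x v, f x + f' x v ≤ f (x + v)) : ConvexOn ℝ univ f := by
  refine ⟨convex_univ, fun x _ y _ a b ha hb hab => ?_⟩
  set u := a • x + b • y
  have hx := h u (x - u)
  have hy := h u (y - u)
  rw [add_sub_cancel] at hx hy
  have hsum : a • (x - u) + b • (y - u) = 0 := by
    obtain rfl : b = 1 - a := by linarith
    module
  have hlin := congrArg (f' u) hsum
  simp only [map_add, map_smul, map_zero, smul_eq_mul] at hlin ⊢
  have hfu : f u = a * f u + b * f u := by rw [← add_mul, hab, one_mul]
  linarith [mul_le_mul_of_nonneg_left hx ha, mul_le_mul_of_nonneg_left hy hb]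

theorem convexOn_univ_of_iteratedFDeriv_two_nonneg {f : E → ℝ} (hf : ContDiff ℝ 2 f)
    (h : ∀ x v, 0 ≤ iteratedFDeriv ℝ 2 f x ![v, v]) : ConvexOn ℝ univ f := by
  refine convexOn_univ_of_add_le (fderiv ℝ f) fun x v => ?_
  have := le_add_fderiv_add_of_iteratedFDeriv_two_le (f := -f) hf.neg x v (c := 0) fun y => by
    rw [iteratedFDeriv_neg_apply, neg_apply, neg_nonpos]
    exact h y v
  simp only [fderiv_neg, neg_apply, Pi.neg_apply] at this
  linarith

end SecondOrder

section Convexity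

theorem ConvexOn.uncurry_left {𝕜 E F β : Type*} [Semiring 𝕜] [PartialOrder 𝕜]
    [AddCommMonoid E] [AddCommMonoid F] [AddCommMonoid β] [PartialOrder β] [Module 𝕜 E]
    [Module 𝕜 F] [SMul 𝕜 β] {f : E → F → β}
    (hf : ConvexOn 𝕜 univ fun p : E × F => f p.1 p.2) (z : E) : ConvexOn 𝕜 univ (f z) := by
  refine ⟨convex_univ, fun x _ y _ a b ha hb hab => ?_⟩
  simpa [Convex.combo_self hab] using hf.2 (mem_univ (z, x)) (mem_univ (z, y)) ha hb hab

theorem convexOn_integral {E Ω : Type*} [AddCommGroup E] [Module ℝ E] [MeasurableSpace Ω]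
    {μ : Measure Ω} {s : Set E} {F : Ω → E → ℝ} (hF : ∀ z, ConvexOn ℝ s (F z)) (hs : Convex ℝ s)
    (hint : ∀ x ∈ s, Integrable (fun z => F z x) μ) :
    ConvexOn ℝ s fun x => ∫ z, F z x ∂μ := by
  refine ⟨hs, fun x hx y hy a b ha hb hab => ?_⟩
  have hcomb : Integrable (fun z => a * F z x + b * F z y) μ :=
    ((hint x hx).const_mul a).add ((hint y hy).const_mul b)
  calc ∫ z, F z (a • x + b • y) ∂μ ≤ ∫ z, (a * F z x + b * F z y) ∂μ :=
        integral_mono (hint _ (hs hx hy ha hb hab)) hcomb fun z => (hF z).2 hx hy ha hb hab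
    _ = a • ∫ z, F z x ∂μ + b • ∫ z, F z y ∂μ := by
        rw [integral_add ((hint x hx).const_mul a) ((hint y hy).const_mul b),
          integral_const_mul, integral_const_mul, smul_eq_mul, smul_eq_mul]

variable {E : Type*} [NormedAddCommGroup E] [InnerProductSpace ℝ E]

theorem strongConvexOn_sq_norm_sub (m : ℝ) (x₀ : E) :
    StrongConvexOn univ m fun x => m / 2 * ‖x - x₀‖ ^ 2 := by
  rw [strongConvexOn_iff_convex]
  have hlin : ConvexOn ℝ univ fun x => -(m * ⟪x₀, x⟫) :=
    (-(m • innerₛₗ ℝ x₀)).convexOn convex_univ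
  refine (hlin.add_const (m / 2 * ‖x₀‖ ^ 2)).congr fun x _ => ?_
  rw [Pi.add_apply, norm_sub_sq_real, real_inner_comm]
  ring

theorem uniformConvexOn_csSup_image {ι : Type*} {s : Set E} {φ : ℝ → ℝ} {S : Set ι}
    (hS : S.Nonempty) {F : ι → E → ℝ} (hF : ∀ i ∈ S, UniformConvexOn s φ (F i))
    (hs : Convex ℝ s) (hbdd : ∀ x ∈ s, BddAbove ((fun i => F i x) '' S)) :
    UniformConvexOn s φ fun x => sSup ((fun i => F i x) '' S) := by
  refine ⟨hs, fun x hx y hy a b ha hb hab => csSup_le (hS.image _) ?_⟩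
  rintro _ ⟨i, hi, rfl⟩
  have hFx := le_csSup (hbdd x hx) (mem_image_of_mem _ hi)
  have hFy := le_csSup (hbdd y hy) (mem_image_of_mem _ hi)
  have hFi := (hF i hi).2 hx hy ha hb hab
  simp only [smul_eq_mul] at hFi ⊢
  linarith [mul_le_mul_of_nonneg_left hFx ha,
    mul_le_mul_of_nonneg_left hFy hb]

variable [FiniteDimensional ℝ E]

theorem StrongConvexOn.existsUnique_forall_le {f : E → ℝ} {m : ℝ}
    (hf : StrongConvexOn univ m f) (hm : 0 < m) : ∃! x, ∀ y, f x ≤ f y := by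
  have hcont : Continuous f := continuousOn_univ.1 <|
    (hf.convexOn fun r => by positivity).continuousOn isOpen_univ
  obtain ⟨w, -, hw⟩ := (isCompact_closedBall (0 : E) 1).exists_isMinOn
    (nonempty_closedBall.2 zero_le_one) hcont.continuousOn
  -- Comparing `f x` with `f` at the point `x / ‖x‖` of the unit ball gives quadratic growth.
  have hgrowth : ∀ x : E, 1 ≤ ‖x‖ → f 0 + ‖x‖ * (f w - f 0 + m / 2 * (‖x‖ - 1)) ≤ f x := by
    intro x hx
    have hr : 0 < ‖x‖ := one_pos.trans_le hx
    have hmem : (1 - ‖x‖⁻¹) • (0 : E) + ‖x‖⁻¹ • x ∈ closedBall (0 : E) 1 := by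
      simp [norm_smul, hr.ne']
    have hconv := hf.2 (mem_univ 0) (mem_univ x) (sub_nonneg.2 (inv_le_one_of_one_le₀ hx))
      (inv_nonneg.2 hr.le) (sub_add_cancel 1 ‖x‖⁻¹)
    have hscaled := mul_le_mul_of_nonneg_left ((hw hmem).trans hconv) hr.le
    simp only [smul_eq_mul, zero_sub, norm_neg] at hscaled
    have hexpand : ‖x‖ * ((1 - ‖x‖⁻¹) * f 0 + ‖x‖⁻¹ * f x - (1 - ‖x‖⁻¹) * ‖x‖⁻¹ * (m / 2 * ‖x‖ ^ 2))
        = (‖x‖ - 1) * f 0 + f x - (‖x‖ - 1) * (m / 2 * ‖x‖) := by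
      field_simp
    linarith
  obtain ⟨x, hx⟩ := hcont.exists_forall_le' 0 <| by
    refine Filter.mem_of_superset
      (isCompact_closedBall (0 : E) (1 + 2 * (f 0 - f w) / m)).compl_mem_cocompact fun x hx => ?_
    rw [mem_compl_iff, mem_closedBall, dist_zero_right, not_le] at hx
    have hx' : 2 * (f 0 - f w) < (‖x‖ - 1) * m := by
      rw [← div_lt_iff₀ hm]
      linarith
    have hw0 : f w ≤ f 0 := hw (mem_closedBall_self zero_le_one)
    have h1 : 1 ≤ ‖x‖ := by nlinarith
    have h2 : 0 ≤ f w - f 0 + m / 2 * (‖x‖ - 1) := by linarith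
    show f 0 ≤ f x
    nlinarith [hgrowth x h1, mul_nonneg (norm_nonneg x) h2]
  exact ⟨x, hx, fun y hy => (hf.strictConvexOn hm).eq_of_isMinOn (fun z _ => hy z)
    (fun z _ => hx z) (mem_univ y) (mem_univ x)⟩

end Convexity

section Integrability

variable {F : Type*} [NormedAddCommGroup F] [InnerProductSpace ℝ F] [FiniteDimensional ℝ F]
  [MeasurableSpace F] [BorelSpace F]

theorem integrable_exp_neg_mul_sq_norm {k : ℝ} (hk : 0 < k) :
    Integrable (fun z : F => exp (-k * ‖z‖ ^ 2)) := by
  refine (GaussianFourier.integrable_cexp_neg_mul_sq_norm_add (V := F) (b := (k : ℂ))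
    (by simpa using hk) 0 0).norm.congr (.of_forall fun z => ?_)
  simp only [Complex.norm_exp, zero_mul, add_zero]
  norm_cast

theorem integrable_exp_mul_sq_norm_withDensity {ρ : F → ℝ} (hρ_pos : ∀ z, 0 < ρ z)
    (hlog : ContDiff ℝ 2 fun z => log (ρ z)) {k : ℝ}
    (hk : ∀ z v, iteratedFDeriv ℝ 2 (fun z => log (ρ z)) z ![v, v] ≤ -k * ‖v‖ ^ 2) {s : ℝ}
    (hs : s < k / 2) :
    Integrable (fun z => exp (s * ‖z‖ ^ 2)) (volume.withDensity fun z => .ofReal (ρ z)) := by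
  obtain ⟨a, ha_k, ha_s⟩ := exists_between (show -k / 2 < -s by linarith)
  obtain ⟨M, hM⟩ := exists_forall_sub_mul_sq_norm_le hlog hk ha_k
  have hρ : Measurable ρ :=
    ((continuous_congr fun z => exp_log (hρ_pos z)).1 hlog.continuous.rexp).measurable
  rw [integrable_withDensity_iff hρ.ennreal_ofReal
    (.of_forall fun _ => ENNReal.ofReal_lt_top)]
  refine ((integrable_exp_neg_mul_sq_norm (show 0 < -(s + a) by linarith)).const_mul
    (exp M)).mono' (by fun_prop) (.of_forall fun z => ?_)
  rw [ENNReal.toReal_ofReal (hρ_pos z).le, norm_of_nonneg (mul_nonneg (exp_pos _).le (hρ_pos z).le),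
    ← exp_log (hρ_pos z), ← exp_add, ← exp_add, exp_le_exp]
  linarith [hM z]


theorem integrable_of_nonneg_of_iteratedFDeriv_two_le {E : Type*} [NormedAddCommGroup E]
    [NormedSpace ℝ E] [MeasurableSpace E] [OpensMeasurableSpace E] {g : E → ℝ} (hg : ContDiff ℝ 2 g)
    (hg_nonneg : ∀ z, 0 ≤ g z) {c : ℝ} (hc : ∀ y v, iteratedFDeriv ℝ 2 g y ![v, v] ≤ c * ‖v‖ ^ 2)
    {μ : Measure E} [IsFiniteMeasure μ] (hμ : Integrable (fun z => ‖z‖ ^ 2) μ) :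
    Integrable g μ := by
  obtain ⟨M, hM⟩ := exists_forall_sub_mul_sq_norm_le hg hc (lt_add_one (c / 2))
  refine ((integrable_const M).add (hμ.const_mul (c / 2 + 1))).mono'
    hg.continuous.aestronglyMeasurable (.of_forall fun z => ?_)
  rw [Pi.add_apply, norm_of_nonneg (hg_nonneg z)]
  linarith [hM z]

theorem isProbabilityMeasure_withDensity_ofReal {Ω : Type*} [MeasurableSpace Ω] {μ : Measure Ω}
    {f : Ω → ℝ} (hf : Integrable f μ) (hf_nonneg : 0 ≤ᵐ[μ] f) (hf_one : ∫ x, f x ∂μ = 1) :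
    IsProbabilityMeasure (μ.withDensity fun x => ENNReal.ofReal (f x)) :=
  ⟨by rw [withDensity_apply _ MeasurableSet.univ, Measure.restrict_univ,
    ← ofReal_integral_eq_lintegral_ofReal hf hf_nonneg, hf_one, ENNReal.ofReal_one]⟩

theorem integral_sub_log_integral_exp_le_integral_llr {α : Type*} [MeasurableSpace α]
    {μ ν : Measure α} [IsProbabilityMeasure μ] [IsProbabilityMeasure ν] {f : α → ℝ}
    (hμν : μ ≪ ν) (hfμ : Integrable f μ) (hfν : Integrable (fun x => exp (f x)) ν)
    (h_int : Integrable (llr μ ν) μ) :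
    ∫ x, f x ∂μ - log (∫ x, exp (f x) ∂ν) ≤ ∫ x, llr μ ν x ∂μ := by
  have : IsProbabilityMeasure (ν.tilted f) := isProbabilityMeasure_tilted hfν
  have hgibbs := InformationTheory.integral_llr_add_sub_measure_univ_nonneg
    (hμν.trans (absolutelyContinuous_tilted hfν)) (integrable_llr_tilted_right hμν hfμ h_int hfν)
  rw [integral_llr_tilted_right hμν hfμ hfν h_int] at hgibbs
  simp only [probReal_univ] at hgibbs
  linarith

end Integrability

section EnergyFunctional

variable {d : ℕ} {f1 f2 : EuclideanSpace ℝ (Fin d) → EuclideanSpace ℝ (Fin d) → ℝ}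
  {W : EuclideanSpace ℝ (Fin d) → ℝ} {ρb ρt ρ : Measure (EuclideanSpace ℝ (Fin d))} {α β : ℝ}
  {x0 : EuclideanSpace ℝ (Fin d)}

theorem strongConvexOn_Gc_s4 (hf1 : ∀ z, ConvexOn ℝ univ (f1 z)) (hf2 : ∀ z, ConvexOn ℝ univ (f2 z))
    (hf1_int : ∀ x, Integrable (fun z => f1 z x) ρ) (hf2_int : ∀ x, Integrable (fun z => f2 z x) ρb) :
    StrongConvexOn univ β (Gc f1 f2 W ρb ρt α β x0 ρ) := by
  have hconv := ((convexOn_integral hf1 convex_univ fun x _ => hf1_int x).add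
    (convexOn_integral hf2 convex_univ fun x _ => hf2_int x)).add_const
    (-(α * ∫ z, log ((ρ.rnDeriv ρt z).toReal) ∂ρ) - 1 / 2 * ∫ z, (∫ z', W (z - z') ∂ρ) ∂ρ)
  have h := (uniformConvexOn_zero.2 hconv).add (strongConvexOn_sq_norm_sub β x0)
  rw [zero_add] at h
  unfold StrongConvexOn
  convert h using 1
  funext x
  simp only [Gc, Pi.add_apply]
  ring

theorem Gc_le [IsProbabilityMeasure ρt] (hρ : ρ ∈ Aset ρt) (hα : 0 ≤ α) (hW : ∀ z, 0 ≤ W z)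
    {ψ : EuclideanSpace ℝ (Fin d) → ℝ} (hψ : Integrable ψ ρ)
    (hexp : Integrable (fun z => exp (ψ z)) ρt) {x : EuclideanSpace ℝ (Fin d)}
    (hf1 : Integrable (fun z => f1 z x) ρ) {M : ℝ} (hM : ∀ z, f1 z x - α * ψ z ≤ M) :
    Gc f1 f2 W ρb ρt α β x0 ρ x
      ≤ M + α * log (∫ z, exp (ψ z) ∂ρt) + (∫ z, f2 z x ∂ρb) + β / 2 * ‖x - x0‖ ^ 2 := by
  obtain ⟨hρ_prob, -, hac, hllr⟩ := hρ
  have hKL := integral_sub_log_integral_exp_le_integral_llr hac hψ hexp hllr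
  have hf1ψ : ∫ z, (f1 z x - α * ψ z) ∂ρ ≤ M := by
    simpa using integral_mono (hf1.sub (hψ.const_mul α)) (integrable_const M) hM
  rw [integral_sub hf1 (hψ.const_mul α), integral_const_mul] at hf1ψ
  have hW_nonneg : 0 ≤ ∫ z, (∫ z', W (z - z') ∂ρ) ∂ρ :=
    integral_nonneg fun z => integral_nonneg fun z' => hW _
  have hαKL := mul_le_mul_of_nonneg_left hKL hα
  simp only [Gc, llr] at hαKL ⊢
  linarith

theorem bddAbove_Gc_image [IsProbabilityMeasure ρt] (hα : 0 < α) (hW : ∀ z, 0 ≤ W z)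
    (hf1 : ∀ x, ContDiff ℝ 2 fun z => f1 z x) {Λ s : ℝ}
    (hf1_hess : ∀ z x v, iteratedFDeriv ℝ 2 (fun z' => f1 z' x) z ![v, v] ≤ Λ * ‖v‖ ^ 2)
    (hs : Λ / 2 < α * s) (hexp : Integrable (fun z => exp (s * ‖z‖ ^ 2)) ρt)
    (hf1_int : ∀ ρ ∈ Aset ρt, ∀ x, Integrable (fun z => f1 z x) ρ) (x : EuclideanSpace ℝ (Fin d)) :
    BddAbove ((fun ρ => Gc f1 f2 W ρb ρt α β x0 ρ x) '' Aset ρt) := by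
  obtain ⟨M, hM⟩ := exists_forall_sub_mul_sq_norm_le (hf1 x) (hf1_hess · x) hs
  exact ⟨_, forall_mem_image.2 fun ρ hρ => Gc_le hρ hα.le hW (hρ.2.1.const_mul s) hexp
    (hf1_int ρ hρ x) fun z => (mul_assoc α s _).symm ▸ hM z⟩

end EnergyFunctional

theorem stmt4_general {d : ℕ} (α β : ℝ) (hα : 0 < α) (hβ : 0 < β)
    (x0 : EuclideanSpace ℝ (Fin d)) (lam1 lam2 : ℝ) (hlam1 : 0 ≤ lam1) (hlam2 : 0 ≤ lam2)
    -- Assumption (i): convexity and growth of `f1`, `f2`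
    (f1 f2 : EuclideanSpace ℝ (Fin d) → EuclideanSpace ℝ (Fin d) → ℝ)
    (hf1nn : ∀ z x, 0 ≤ f1 z x) (hf2nn : ∀ z x, 0 ≤ f2 z x)
    (hf1C : ContDiff ℝ 2 (fun p : EuclideanSpace ℝ (Fin d) × EuclideanSpace ℝ (Fin d) => f1 p.1 p.2))
    (hf2C : ContDiff ℝ 2 (fun p : EuclideanSpace ℝ (Fin d) × EuclideanSpace ℝ (Fin d) => f2 p.1 p.2))
    (hf1hess : ∀ (z x v w : EuclideanSpace ℝ (Fin d)),
      lam1 * (‖v‖ ^ 2 + ‖w‖ ^ 2) ≤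
        iteratedFDeriv ℝ 2 (fun p : EuclideanSpace ℝ (Fin d) × EuclideanSpace ℝ (Fin d) => f1 p.1 p.2) (z, x) ![(v, w), (v, w)])
    (hf2hess : ∀ (z x v : EuclideanSpace ℝ (Fin d)),
      lam2 * ‖v‖ ^ 2 ≤ iteratedFDeriv ℝ 2 (fun x' => f2 z x') x ![v, v])
    -- Assumption (ii): shape of the reference distribution `ρ̃`
    (ρtd : EuclideanSpace ℝ (Fin d) → ℝ) (hρtd_pos : ∀ z, 0 < ρtd z)
    (hρtd_int : Integrable ρtd volume) (hρtd_one : ∫ z, ρtd z = 1)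
    (hlog : ContDiff ℝ 2 (fun z : EuclideanSpace ℝ (Fin d) => Real.log (ρtd z)))
    (lamt : ℝ)
    (hloghess : ∀ z v : EuclideanSpace ℝ (Fin d),
      iteratedFDeriv ℝ 2 (fun z' => Real.log (ρtd z')) z ![v, v] ≤ -lamt * ‖v‖ ^ 2)
    (ρt : Measure (EuclideanSpace ℝ (Fin d)))
    (hρt : ρt = volume.withDensity (fun z => ENNReal.ofReal (ρtd z)))
    -- Assumption (iii): the interaction kernel `W`
    (W : EuclideanSpace ℝ (Fin d) → ℝ) (hWnn : ∀ z, 0 ≤ W z)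
    -- Assumption (iv): upper bounds for `f1` and `f2`
    (Lam1 : ℝ)
    (hf1hess_up : ∀ (z x v : EuclideanSpace ℝ (Fin d)),
      iteratedFDeriv ℝ 2 (fun z' => f1 z' x) z ![v, v] ≤ Lam1 * ‖v‖ ^ 2)
    (ρb : Measure (EuclideanSpace ℝ (Fin d))) [IsProbabilityMeasure ρb]
    (hf2sup : ∀ R : ℝ, 0 < R → ∃ C : ℝ, ∀ x : EuclideanSpace ℝ (Fin d), ‖x‖ ≤ R →
      ∫⁻ z, ENNReal.ofReal (f2 z x) ∂ρb ≤ ENNReal.ofReal C)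
    -- Assumption (v)
    (hcoerc : Lam1 < α * lamt)
    (hAne : (Aset ρt).Nonempty) :
    (∀ x : EuclideanSpace ℝ (Fin d), BddAbove ((fun ρ => Gc f1 f2 W ρb ρt α β x0 ρ x) '' Aset ρt)) ∧
    ∃! xinf : EuclideanSpace ℝ (Fin d), ∀ x : EuclideanSpace ℝ (Fin d),
      sSup ((fun ρ => Gc f1 f2 W ρb ρt α β x0 ρ xinf) '' Aset ρt) ≤ sSup ((fun ρ => Gc f1 f2 W ρb ρt α β x0 ρ x) '' Aset ρt) := by
  have : IsProbabilityMeasure ρt := hρt ▸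
    isProbabilityMeasure_withDensity_ofReal hρtd_int (.of_forall fun z => (hρtd_pos z).le) hρtd_one
  obtain ⟨s, hs_f1, hs_ρt⟩ := exists_between (show Lam1 / (2 * α) < lamt / 2 by
    rw [div_lt_div_iff₀ (by positivity) two_pos]; nlinarith)
  have hexp : Integrable (fun z => exp (s * ‖z‖ ^ 2)) ρt :=
    hρt ▸ integrable_exp_mul_sq_norm_withDensity hρtd_pos hlog hloghess hs_ρt
  have hf1_z : ∀ x, ContDiff ℝ 2 fun z => f1 z x := fun x =>
    hf1C.comp (contDiff_id.prodMk contDiff_const)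
  have hf1_int : ∀ ρ ∈ Aset ρt, ∀ x, Integrable (fun z => f1 z x) ρ := fun ρ hρ x =>
    have := hρ.1
    integrable_of_nonneg_of_iteratedFDeriv_two_le (hf1_z x) (hf1nn · x) (hf1hess_up · x) hρ.2.1
  have hbdd : ∀ x, BddAbove ((fun ρ => Gc f1 f2 W ρb ρt α β x0 ρ x) '' Aset ρt) :=
    bddAbove_Gc_image hα hWnn hf1_z hf1hess_up
      (by rw [div_lt_iff₀ (by positivity)] at hs_f1; linarith) hexp hf1_int
  refine ⟨hbdd, ?_⟩
  have hf1_cvx : ∀ z, ConvexOn ℝ univ (f1 z) :=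
    (convexOn_univ_of_iteratedFDeriv_two_nonneg hf1C fun p v =>
      (mul_nonneg hlam1 (by positivity)).trans (hf1hess p.1 p.2 v.1 v.2)).uncurry_left
  have hf2_cvx : ∀ z, ConvexOn ℝ univ (f2 z) := fun z =>
    convexOn_univ_of_iteratedFDeriv_two_nonneg (hf2C.comp (contDiff_const.prodMk contDiff_id))
      fun x v => (mul_nonneg hlam2 (sq_nonneg _)).trans (hf2hess z x v)
  have hf2_int : ∀ x, Integrable (fun z => f2 z x) ρb := fun x => by
    obtain ⟨C, hC⟩ := hf2sup (‖x‖ + 1) (by positivity)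
    exact ⟨(hf2C.continuous.comp (continuous_id.prodMk continuous_const)).aestronglyMeasurable,
      (hasFiniteIntegral_iff_ofReal (.of_forall (hf2nn · x))).2
        ((hC x (by linarith)).trans_lt ENNReal.ofReal_lt_top)⟩
  exact StrongConvexOn.existsUnique_forall_le (uniformConvexOn_csSup_image hAne
    (fun ρ hρ => strongConvexOn_Gc_s4 hf1_cvx hf2_cvx (hf1_int ρ hρ) hf2_int) convex_univ
    fun x _ => hbdd x) hβ

/-- Theorem 3(a): existence and uniqueness of the minimizer of
`G_d(x) = sup_{ρ ∈ A} G_c(ρ, x)`. Under Assumptions 1–4 and `αλ̃ > Λ1`, `G_d` is finite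
everywhere (the supremum is over a set bounded above) and has a unique minimizer. -/
theorem stmt4 {d : ℕ} (hd : 1 ≤ d) (α β : ℝ) (hα : 0 < α) (hβ : 0 < β)
    (x0 : EuclideanSpace ℝ (Fin d)) (lam1 lam2 : ℝ) (hlam1 : 0 ≤ lam1) (hlam2 : 0 ≤ lam2)
    -- Assumption (i): convexity and growth of `f1`, `f2`
    (f1 f2 : EuclideanSpace ℝ (Fin d) → EuclideanSpace ℝ (Fin d) → ℝ)
    (hf1nn : ∀ z x, 0 ≤ f1 z x) (hf2nn : ∀ z x, 0 ≤ f2 z x)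
    (hf1C : ContDiff ℝ 2 (fun p : EuclideanSpace ℝ (Fin d) × EuclideanSpace ℝ (Fin d) => f1 p.1 p.2))
    (hf2C : ContDiff ℝ 2 (fun p : EuclideanSpace ℝ (Fin d) × EuclideanSpace ℝ (Fin d) => f2 p.1 p.2))
    (hf1hess : ∀ (z x v w : EuclideanSpace ℝ (Fin d)),
      lam1 * (‖v‖ ^ 2 + ‖w‖ ^ 2) ≤
        iteratedFDeriv ℝ 2 (fun p : EuclideanSpace ℝ (Fin d) × EuclideanSpace ℝ (Fin d) => f1 p.1 p.2) (z, x) ![(v, w), (v, w)])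
    (hf2hess : ∀ (z x v : EuclideanSpace ℝ (Fin d)),
      lam2 * ‖v‖ ^ 2 ≤ iteratedFDeriv ℝ 2 (fun x' => f2 z x') x ![v, v])
    (a1 a2 : ℝ) (ha1 : 0 < a1) (ha2 : 0 < a2)
    (hf1a : ∀ z x, -a1 ≤ ⟪x, gradient (fun x' => f1 z x') x⟫)
    (hf2a : ∀ z x, -a2 ≤ ⟪x, gradient (fun x' => f2 z x') x⟫)
    -- Assumption (ii): shape of the reference distribution `ρ̃`
    (ρtd : EuclideanSpace ℝ (Fin d) → ℝ) (hρtd_pos : ∀ z, 0 < ρtd z)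
    (hρtd_int : Integrable ρtd volume) (hρtd_one : ∫ z, ρtd z = 1)
    (hlog : ContDiff ℝ 2 (fun z : EuclideanSpace ℝ (Fin d) => Real.log (ρtd z)))
    (lamt : ℝ) (hlamt : 0 < lamt)
    (hloghess : ∀ z v : EuclideanSpace ℝ (Fin d),
      iteratedFDeriv ℝ 2 (fun z' => Real.log (ρtd z')) z ![v, v] ≤ -lamt * ‖v‖ ^ 2)
    (ρt : Measure (EuclideanSpace ℝ (Fin d)))
    (hρt : ρt = volume.withDensity (fun z => ENNReal.ofReal (ρtd z)))
    -- Assumption (iii): the interaction kernel `W`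
    (W : EuclideanSpace ℝ (Fin d) → ℝ) (hWnn : ∀ z, 0 ≤ W z)
    (hWC : ContDiff ℝ 2 W) (hWconv : ConvexOn ℝ Set.univ W)
    (hWsymm : ∀ z, W (-z) = W z)
    (D : ℝ) (hD : 0 < D)
    (hWD1 : ∀ z, -D ≤ ⟪z, gradient W z⟫)
    (hWD2 : ∀ z, ‖gradient W z‖ ≤ D * (1 + ‖z‖))
    -- Assumption (iv): upper bounds for `f1` and `f2`
    (Lam1 : ℝ)
    (hf1hess_up : ∀ (z x v : EuclideanSpace ℝ (Fin d)),
      iteratedFDeriv ℝ 2 (fun z' => f1 z' x) z ![v, v] ≤ Lam1 * ‖v‖ ^ 2)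
    (ρb : Measure (EuclideanSpace ℝ (Fin d))) [IsProbabilityMeasure ρb]
    (hf2sup : ∀ R : ℝ, 0 < R → ∃ C : ℝ, ∀ x : EuclideanSpace ℝ (Fin d), ‖x‖ ≤ R →
      ∫⁻ z, ENNReal.ofReal (f2 z x) ∂ρb ≤ ENNReal.ofReal C)
    -- Assumption (v)
    (hcoerc : Lam1 < α * lamt)
    (hAne : (Aset ρt).Nonempty) :
    (∀ x : EuclideanSpace ℝ (Fin d), BddAbove ((fun ρ => Gc f1 f2 W ρb ρt α β x0 ρ x) '' Aset ρt)) ∧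
    ∃! xinf : EuclideanSpace ℝ (Fin d), ∀ x : EuclideanSpace ℝ (Fin d),
      sSup ((fun ρ => Gc f1 f2 W ρb ρt α β x0 ρ xinf) '' Aset ρt) ≤ sSup ((fun ρ => Gc f1 f2 W ρb ρt α β x0 ρ x) '' Aset ρt) :=
  stmt4_general α β hα hβ x0 lam1 lam2 hlam1 hlam2 f1 f2 hf1nn hf2nn hf1C hf2C hf1hess hf2hess ρtd
    hρtd_pos hρtd_int hρtd_one hlog lamt hloghess ρt hρt W hWnn Lam1 hf1hess_up ρb hf2sup hcoerc
    hAne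
end
end
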